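/- Fix ε > 0, β = (β₀, β_N, β_C) ∈ ℝ^{n+k+1}, and data points ξⁱ = (xⁱ, zⁱ, yⁱ) ∈ Ξ for i ∈ [N]. Suppose λ ∈ ℝ and s ∈ ℝᴺ satisfy ‖β_N‖_* ≤ λ and, for every i ∈ [N] and every z ∈ C, both l_β(xⁱ, z, yⁱ) − λ·d_C(z, zⁱ) ≤ s_i and l_β(xⁱ, z, −yⁱ) − λκ − λ·d_C(z, zⁱ) ≤ s_i. Then for every probability measure Q on Ξ with W(Q, P̂_N) ≤ ε, one has E_Q[l_β] ≤ λε + (1/N)∑_{i=1}^N s_i. -/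

import Mathlib

open scoped BigOperators ENNReal NNReal
open MeasureTheory

noncomputable section

namespace DRLR

/-- `catCube s` is the one-hot encoding set `C(s) = {z ∈ {0,1}^{s-1} : ∑ z_j ≤ 1}`
of a categorical feature with `s` possible values. -/
def catCube (s : ℕ) : Set (Fin (s - 1) → ℝ) :=
  {z | (∀ i, z i = 0 ∨ z i = 1) ∧ ∑ i, z i ≤ 1}

variable (n m : ℕ) (k : Fin m → ℕ)

/-- Ambient space containing the categorical block `C = C(k₁) × ⋯ × C(k_m)`. -/
abbrev CatSpace := (j : Fin m) → Fin (k j - 1) → ℝ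

/-- The predicate `z ∈ C`. -/
def memCat (z : CatSpace m k) : Prop := ∀ j, z j ∈ catCube (k j)

/-- Ambient feature-label space `ℝⁿ × (ambient categorical space) × ℝ`. -/
abbrev Amb := (Fin n → ℝ) × CatSpace m k × ℝ

/-- The feature-label support `Ξ = ℝⁿ × C × {-1, +1}` as a subset of the ambient space. -/
def XiSet : Set (Amb n m k) :=
  {ξ | memCat m k ξ.2.1 ∧ (ξ.2.2 = -1 ∨ ξ.2.2 = 1)}

/-- `Ξ` as a (measurable) type. -/
abbrev Xi := {ξ : Amb n m k // ξ ∈ XiSet n m k}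

/-- The categorical metric `d_C(z, z') = (∑_j 1[z_j ≠ z'_j])^{1/p}`. -/
def dCat (p : ℝ) (z z' : CatSpace m k) : ℝ :=
  (({j | z j ≠ z' j}.ncard : ℝ)) ^ (1 / p)

/-- The ground metric
`d(ξ, ξ') = ‖x - x'‖ + d_C(z, z') + κ·1[y ≠ y']` on the ambient space. -/
def gdist (nrm : (Fin n → ℝ) → ℝ) (κ p : ℝ) (ξ ξ' : Amb n m k) : ℝ :=
  nrm (ξ.1 - ξ'.1) + dCat m k p ξ.2.1 ξ'.2.1 + κ * (if ξ.2.2 ≠ ξ'.2.2 then 1 else 0)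

/-- The log-loss `l_β(x, z, y) = log (1 + exp (-y·(β₀ + β_Nᵀx + β_Cᵀz)))`. -/
def logloss (β₀ : ℝ) (βN : Fin n → ℝ) (βC : CatSpace m k) (ξ : Amb n m k) : ℝ :=
  Real.log (1 + Real.exp
    (-(ξ.2.2 * (β₀ + ∑ i, βN i * ξ.1 i + ∑ j, ∑ i, βC j i * ξ.2.1 j i))))

/-- The empirical distribution `P̂_N = (1/N) ∑ᵢ δ_{ξⁱ}`. -/
def empMeasure (N : ℕ) (ξdata : Fin N → Xi n m k) : Measure (Xi n m k) :=
  (N : ℝ≥0∞)⁻¹ • ∑ i, Measure.dirac (ξdata i)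

/-- Couplings of two probability measures on `Ξ`. -/
def couplings (Q P : Measure (Xi n m k)) : Set (Measure (Xi n m k × Xi n m k)) :=
  {π | IsProbabilityMeasure π ∧ π.fst = Q ∧ π.snd = P}

/-- The type-1 Wasserstein distance on probability measures over `Ξ`. -/
def wass (nrm : (Fin n → ℝ) → ℝ) (κ p : ℝ) (Q P : Measure (Xi n m k)) : ℝ≥0∞ :=
  ⨅ π ∈ couplings n m k Q P,
    ∫⁻ q, ENNReal.ofReal (gdist n m k nrm κ p q.1.1 q.2.1) ∂π

/-- Expected log-loss (as an extended nonnegative real). -/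
def expLoss (β₀ : ℝ) (βN : Fin n → ℝ) (βC : CatSpace m k) (Q : Measure (Xi n m k)) : ℝ≥0∞ :=
  ∫⁻ ξ, ENNReal.ofReal (logloss n m k β₀ βN βC ξ.1) ∂Q

/-- Worst-case expected log-loss over the Wasserstein ball `B_ε(P̂_N)`. -/
def worstCase (nrm : (Fin n → ℝ) → ℝ) (κ p ε : ℝ) (β₀ : ℝ) (βN : Fin n → ℝ)
    (βC : CatSpace m k) (N : ℕ) (ξdata : Fin N → Xi n m k) : ℝ≥0∞ :=
  sSup {t : ℝ≥0∞ | ∃ Q : Measure (Xi n m k), IsProbabilityMeasure Q ∧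
    wass n m k nrm κ p Q (empMeasure n m k N ξdata) ≤ ENNReal.ofReal ε ∧
    t = expLoss n m k β₀ βN βC Q}

/-- The dual norm `‖γ‖_* = sup {γᵀw : nrm w ≤ 1}`. -/
def dualNorm (nrm : (Fin n → ℝ) → ℝ) (γ : Fin n → ℝ) : ℝ :=
  sSup {t : ℝ | ∃ w : Fin n → ℝ, nrm w ≤ 1 ∧ t = ∑ i, γ i * w i}

/-- Feasibility of `(λ, s)` in the dual reformulation for fixed `β`. -/
def feasibleDual (nrm : (Fin n → ℝ) → ℝ) (κ p : ℝ) (β₀ : ℝ) (βN : Fin n → ℝ)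
    (βC : CatSpace m k) (N : ℕ) (ξdata : Fin N → Xi n m k)
    (lam : ℝ) (s : Fin N → ℝ) : Prop :=
  dualNorm n nrm βN ≤ lam ∧
  ∀ i : Fin N, ∀ z : CatSpace m k, memCat m k z →
    (logloss n m k β₀ βN βC ((ξdata i).1.1, z, (ξdata i).1.2.2)
        - lam * dCat m k p z (ξdata i).1.2.1 ≤ s i) ∧
    (logloss n m k β₀ βN βC ((ξdata i).1.1, z, -(ξdata i).1.2.2)
        - lam * κ - lam * dCat m k p z (ξdata i).1.2.1 ≤ s i)

end DRLR

/-!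
Fix a coupling `π` of `Q` and `P̂_N`. Feasibility of `(λ, s)` gives the pointwise bound
`l_β(ξ) ≤ sᵢ + λ d(ξ, ξⁱ)` for every `ξ ∈ Ξ`: moving `x` to `xⁱ` costs at most `λ ‖x - xⁱ‖`,
since `t ↦ log (1 + exp t)` is 1-Lipschitz and `|β_Nᵀ(x - xⁱ)| ≤ ‖β_N‖_* ‖x - xⁱ‖`, and the two
constraints bound what is left according to whether `y = yⁱ` or `y = -yⁱ`. Integrating against `π`
gives `E_Q[l_β] ≤ (1/N) ∑ᵢ sᵢ + λ ∫ d dπ`, and the infimum over couplings turns the last term into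
`λ W(Q, P̂_N) ≤ λ ε`.
-/

namespace DRLR

/-- `Fin n → ℝ` already carries the sup norm, so the norm of the ground metric is a bare function
satisfying the norm axioms. -/
structure IsNormFun {E : Type*} [AddCommGroup E] [Module ℝ E] (nrm : E → ℝ) : Prop where
  eq_zero_iff : ∀ w, nrm w = 0 ↔ w = 0
  smul : ∀ (c : ℝ) (w : E), nrm (c • w) = |c| * nrm w
  add_le : ∀ w w', nrm (w + w') ≤ nrm w + nrm w'

namespace IsNormFun

variable {E : Type*} [AddCommGroup E] [Module ℝ E] {nrm : E → ℝ}

lemma map_zero (h : IsNormFun nrm) : nrm 0 = 0 := (h.eq_zero_iff 0).2 rfl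

lemma nonneg (h : IsNormFun nrm) (w : E) : 0 ≤ nrm w := by
  have htri := h.add_le w (-w)
  rw [add_neg_cancel, h.map_zero, ← neg_one_smul ℝ w, h.smul] at htri
  norm_num at htri
  linarith

lemma exists_abs_le_mul [FiniteDimensional ℝ E] (h : IsNormFun nrm) (f : E →ₗ[ℝ] ℝ) :
    ∃ C, ∀ w, |f w| ≤ C * nrm w := by
  -- Renorm `E` by `nrm`: linear maps out of a finite-dimensional normed space are continuous.
  let : Norm E := ⟨nrm⟩
  have core : NormedSpace.Core ℝ E :=
    { norm_nonneg := h.nonneg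
      norm_smul := fun c w => by rw [Real.norm_eq_abs]; exact h.smul c w
      norm_triangle := h.add_le
      norm_eq_zero_iff := h.eq_zero_iff }
  let := NormedAddCommGroup.ofCore core
  let := NormedSpace.ofCore core
  exact ⟨‖LinearMap.toContinuousLinearMap f‖, (LinearMap.toContinuousLinearMap f).le_opNorm⟩

end IsNormFun

section DualNorm

variable {n : ℕ} {nrm : (Fin n → ℝ) → ℝ}

lemma bddAbove_dualNorm_set (hnrm : IsNormFun nrm) (γ : Fin n → ℝ) :
    BddAbove {t : ℝ | ∃ w : Fin n → ℝ, nrm w ≤ 1 ∧ t = ∑ i, γ i * w i} := by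
  obtain ⟨C, hC⟩ := hnrm.exists_abs_le_mul (dotProductBilin ℝ ℝ γ)
  refine ⟨max C 0, ?_⟩
  rintro t ⟨w, hw, rfl⟩
  calc ∑ i, γ i * w i ≤ |dotProductBilin ℝ ℝ γ w| := le_abs_self _
    _ ≤ max C 0 * nrm w := (hC w).trans <|
        mul_le_mul_of_nonneg_right (le_max_left _ _) (hnrm.nonneg w)
    _ ≤ max C 0 := mul_le_of_le_one_right (le_max_right _ _) hw

lemma dualNorm_nonneg (hnrm : IsNormFun nrm) (γ : Fin n → ℝ) : 0 ≤ dualNorm n nrm γ :=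
  le_csSup (bddAbove_dualNorm_set hnrm γ) ⟨0, by simp [hnrm.map_zero]⟩

lemma sum_mul_le_dualNorm_mul (hnrm : IsNormFun nrm) (γ w : Fin n → ℝ) :
    ∑ i, γ i * w i ≤ dualNorm n nrm γ * nrm w := by
  rcases (hnrm.nonneg w).eq_or_lt with hzero | hpos
  · simp [(hnrm.eq_zero_iff w).1 hzero.symm, hnrm.map_zero]
  · have hunit : nrm ((nrm w)⁻¹ • w) ≤ 1 := by
      rw [hnrm.smul, abs_inv, abs_of_pos hpos, inv_mul_cancel₀ hpos.ne']
    have hle := le_csSup (bddAbove_dualNorm_set hnrm γ) ⟨_, hunit, rfl⟩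
    simp only [Pi.smul_apply, smul_eq_mul, mul_left_comm _ (nrm w)⁻¹, ← Finset.mul_sum] at hle
    rwa [inv_mul_le_iff₀ hpos, mul_comm] at hle

end DualNorm

lemma log_one_add_exp_le_add {a b t : ℝ} (hab : a ≤ b + t) (ht : 0 ≤ t) :
    Real.log (1 + Real.exp a) ≤ Real.log (1 + Real.exp b) + t := by
  have hexp : Real.exp a ≤ Real.exp t * Real.exp b := by
    rw [← Real.exp_add]; exact Real.exp_le_exp.2 (by linarith)
  calc Real.log (1 + Real.exp a) ≤ Real.log (Real.exp t * (1 + Real.exp b)) :=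
        Real.log_le_log (by positivity) (by nlinarith [Real.one_le_exp ht])
    _ = Real.log (1 + Real.exp b) + t := by
        rw [Real.log_mul (by positivity) (by positivity), Real.log_exp, add_comm]

-- Taking the least `s i` over all `i` with `ξdata i = ξ'` copes with repeated data points.
open Classical in
def dataCost {α : Type*} {N : ℕ} (ξdata : Fin N → α) (s : Fin N → ℝ) (ξ' : α) : ℝ≥0∞ :=
  ⨅ i, if ξ' = ξdata i then ENNReal.ofReal (s i) else ∞

lemma measurable_dataCost {α : Type*} [MeasurableSpace α] [MeasurableSingletonClass α] {N : ℕ}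
    (ξdata : Fin N → α) (s : Fin N → ℝ) : Measurable (dataCost ξdata s) :=
  .iInf fun _ => .ite measurableSet_eq measurable_const measurable_const

lemma le_add_mul_biInf {α : Type*} {S : Set α} (hS : S.Nonempty) {g : α → ℝ≥0∞}
    {a c x : ℝ≥0∞} (ha : a ≠ ∞) (h : ∀ π ∈ S, x ≤ c + a * g π) : x ≤ c + a * ⨅ π ∈ S, g π := by
  have := hS.to_subtype
  rw [← iInf_subtype'', ENNReal.mul_iInf fun h => absurd h ha, ENNReal.add_iInf]
  exact le_iInf fun π => h π π.2

section

variable {n m : ℕ} {k : Fin m → ℕ} {nrm : (Fin n → ℝ) → ℝ} {κ p : ℝ}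
  {β₀ : ℝ} {βN : Fin n → ℝ} {βC : CatSpace m k}
  {N : ℕ} {ξdata : Fin N → Xi n m k} {lam : ℝ} {s : Fin N → ℝ}

lemma logloss_nonneg (ξ : Amb n m k) : 0 ≤ logloss n m k β₀ βN βC ξ :=
  Real.log_nonneg (by linarith [Real.exp_pos (-(ξ.2.2 *
    (β₀ + ∑ i, βN i * ξ.1 i + ∑ j, ∑ i, βC j i * ξ.2.1 j i)))])

lemma measurable_logloss : Measurable (logloss n m k β₀ βN βC) := by
  unfold logloss; fun_prop

lemma dCat_self (hp : 0 < p) (z : CatSpace m k) : dCat m k p z z = 0 := by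
  simp [dCat, Real.zero_rpow (inv_pos.2 hp).ne']

lemma logloss_le_logloss_add (hnrm : IsNormFun nrm) (hdual : dualNorm n nrm βN ≤ lam)
    {y : ℝ} (hy : |y| = 1) (x x' : Fin n → ℝ) (z : CatSpace m k) :
    logloss n m k β₀ βN βC (x, z, y) ≤ logloss n m k β₀ βN βC (x', z, y) + lam * nrm (x - x') := by
  have hlam := (dualNorm_nonneg hnrm βN).trans hdual
  apply log_one_add_exp_le_add _ (mul_nonneg hlam (hnrm.nonneg _))
  have hdir := sum_mul_le_dualNorm_mul hnrm βN (-y • (x - x'))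
  rw [hnrm.smul, abs_neg, hy, one_mul] at hdir
  have hsum : ∑ i, βN i * (-y • (x - x')) i = -(y * ∑ i, βN i * x i) + y * ∑ i, βN i * x' i := by
    simp only [Pi.smul_apply, Pi.sub_apply, smul_eq_mul, Finset.mul_sum, ← Finset.sum_neg_distrib,
      ← Finset.sum_add_distrib]
    exact Finset.sum_congr rfl fun i _ => by ring
  linarith [mul_le_mul_of_nonneg_right hdual (hnrm.nonneg (x - x'))]

lemma feasibleDual.lam_nonneg (hnrm : IsNormFun nrm)
    (hfeas : feasibleDual n m k nrm κ p β₀ βN βC N ξdata lam s) : 0 ≤ lam :=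
  (dualNorm_nonneg hnrm βN).trans hfeas.1

lemma feasibleDual.logloss_le_add_gdist (hnrm : IsNormFun nrm)
    (hfeas : feasibleDual n m k nrm κ p β₀ βN βC N ξdata lam s) (i : Fin N) (ξ : Xi n m k) :
    logloss n m k β₀ βN βC ξ.1 ≤ s i + lam * gdist n m k nrm κ p ξ.1 (ξdata i).1 := by
  obtain ⟨hdual, hpt⟩ := hfeas
  obtain ⟨⟨x, z, y⟩, hz, hy⟩ := ξ
  have hi := hpt i z hz
  have hy' := (ξdata i).2.2
  have hlip := logloss_le_logloss_add (β₀ := β₀) (βC := βC) hnrm hdual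
    (y := y) (by rcases hy with rfl | rfl <;> norm_num) x (ξdata i).1.1 z
  by_cases hyy : y = (ξdata i).1.2.2
  · simp only [gdist, hyy, ne_eq, not_true_eq_false, if_false] at hlip ⊢
    linarith [hi.1]
  · have hflip : y = -(ξdata i).1.2.2 := by
      rcases hy with h | h <;> rcases hy' with h' | h' <;> simp_all
    simp only [gdist, ne_eq, hyy, not_false_eq_true, if_true]
    subst hflip
    linarith [hi.2]

lemma feasibleDual.s_nonneg (hp : 0 < p)
    (hfeas : feasibleDual n m k nrm κ p β₀ βN βC N ξdata lam s) (i : Fin N) : 0 ≤ s i := by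
  have hi := (hfeas.2 i _ (ξdata i).2.1).1
  rw [dCat_self hp] at hi
  linarith [logloss_nonneg (β₀ := β₀) (βN := βN) (βC := βC) (ξdata i).1]

lemma lintegral_empMeasure (g : Xi n m k → ℝ≥0∞) :
    ∫⁻ ξ, g ξ ∂empMeasure n m k N ξdata = (N : ℝ≥0∞)⁻¹ * ∑ i, g (ξdata i) := by
  simp [empMeasure, lintegral_finsetSum_measure]

lemma lintegral_dataCost_le (hs : ∀ i, 0 ≤ s i) :
    ∫⁻ ξ, dataCost ξdata s ξ ∂empMeasure n m k N ξdata ≤ ENNReal.ofReal ((1 / N) * ∑ i, s i) := by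
  rw [lintegral_empMeasure]
  rcases N.eq_zero_or_pos with rfl | hN
  · simp
  calc (N : ℝ≥0∞)⁻¹ * ∑ i, dataCost ξdata s (ξdata i)
      ≤ (N : ℝ≥0∞)⁻¹ * ∑ i, ENNReal.ofReal (s i) := by
        gcongr with i
        exact iInf_le_of_le i (by simp)
    _ = ENNReal.ofReal ((1 / N) * ∑ i, s i) := by
        rw [← ENNReal.ofReal_sum_of_nonneg fun i _ => hs i, ENNReal.ofReal_mul (by positivity),
          one_div, ENNReal.ofReal_inv_of_pos (by positivity), ENNReal.ofReal_natCast]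

lemma ofReal_logloss_le (hnrm : IsNormFun nrm)
    (hfeas : feasibleDual n m k nrm κ p β₀ βN βC N ξdata lam s) (ξ ξ' : Xi n m k) :
    ENNReal.ofReal (logloss n m k β₀ βN βC ξ.1) ≤
      dataCost ξdata s ξ' + ENNReal.ofReal lam * ENNReal.ofReal (gdist n m k nrm κ p ξ.1 ξ'.1) := by
  rw [dataCost, ENNReal.iInf_add]
  refine le_iInf fun i => ?_
  split_ifs with h
  · subst h
    rw [← ENNReal.ofReal_mul (hfeas.lam_nonneg hnrm)]
    exact (ENNReal.ofReal_le_ofReal (hfeas.logloss_le_add_gdist hnrm i ξ)).trans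
      ENNReal.ofReal_add_le
  · simp

lemma expLoss_le_of_mem_couplings (hnrm : IsNormFun nrm) (hp : 0 < p)
    (hfeas : feasibleDual n m k nrm κ p β₀ βN βC N ξdata lam s) {Q : Measure (Xi n m k)}
    {π : Measure (Xi n m k × Xi n m k)} (hπ : π ∈ couplings n m k Q (empMeasure n m k N ξdata)) :
    expLoss n m k β₀ βN βC Q ≤ ENNReal.ofReal ((1 / N) * ∑ i, s i) +
      ENNReal.ofReal lam * ∫⁻ q, ENNReal.ofReal (gdist n m k nrm κ p q.1.1 q.2.1) ∂π := by
  obtain ⟨-, hfst, hsnd⟩ := hπ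
  have hloss : Measurable fun ξ : Xi n m k => ENNReal.ofReal (logloss n m k β₀ βN βC ξ.1) :=
    (measurable_logloss.comp measurable_subtype_coe).ennreal_ofReal
  have hcost := measurable_dataCost ξdata s
  have hcost_snd : Measurable fun q : Xi n m k × Xi n m k => dataCost ξdata s q.2 :=
    hcost.comp measurable_snd
  calc expLoss n m k β₀ βN βC Q
      = ∫⁻ q, ENNReal.ofReal (logloss n m k β₀ βN βC q.1.1) ∂π := by
        rw [expLoss, ← hfst, Measure.fst, lintegral_map hloss measurable_fst]
    _ ≤ ∫⁻ q, dataCost ξdata s q.2 +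
          ENNReal.ofReal lam * ENNReal.ofReal (gdist n m k nrm κ p q.1.1 q.2.1) ∂π :=
        lintegral_mono fun q => ofReal_logloss_le hnrm hfeas q.1 q.2
    _ = ∫⁻ ξ, dataCost ξdata s ξ ∂empMeasure n m k N ξdata +
          ENNReal.ofReal lam * ∫⁻ q, ENNReal.ofReal (gdist n m k nrm κ p q.1.1 q.2.1) ∂π := by
        rw [lintegral_add_left hcost_snd, ← hsnd, Measure.snd,
          lintegral_map hcost measurable_snd, lintegral_const_mul' _ _ ENNReal.ofReal_ne_top]
    _ ≤ _ := by
        gcongr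
        exact lintegral_dataCost_le (hfeas.s_nonneg hp)

lemma nonempty_couplings_of_wass_ne_top {Q P : Measure (Xi n m k)}
    (h : wass n m k nrm κ p Q P ≠ ∞) : (couplings n m k Q P).Nonempty := by
  by_contra hS
  simp [wass, Set.not_nonempty_iff_eq_empty.1 hS] at h

end

end DRLR

open DRLR in
theorem dual_feasible_upper_bound_general
    (n m : ℕ) (k : Fin m → ℕ)
    (nrm : (Fin n → ℝ) → ℝ)
    (hnrm_def : ∀ w, nrm w = 0 ↔ w = 0)
    (hnrm_smul : ∀ (c : ℝ) (w : Fin n → ℝ), nrm (c • w) = |c| * nrm w)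
    (hnrm_add : ∀ w w', nrm (w + w') ≤ nrm w + nrm w')
    (κ p : ℝ) (hp : 0 < p)
    (ε : ℝ) (hε : 0 < ε)
    (β₀ : ℝ) (βN : Fin n → ℝ) (βC : CatSpace m k)
    (N : ℕ) (ξdata : Fin N → Xi n m k)
    (lam : ℝ) (s : Fin N → ℝ)
    (hfeas : feasibleDual n m k nrm κ p β₀ βN βC N ξdata lam s) :
    ∀ Q : MeasureTheory.Measure (Xi n m k), MeasureTheory.IsProbabilityMeasure Q →
      wass n m k nrm κ p Q (empMeasure n m k N ξdata) ≤ ENNReal.ofReal ε →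
      expLoss n m k β₀ βN βC Q ≤ ENNReal.ofReal (lam * ε + (1 / N) * ∑ i, s i) := by
  intro Q _ hW
  have hnrm : IsNormFun nrm := ⟨hnrm_def, hnrm_smul, hnrm_add⟩
  have hlam := hfeas.lam_nonneg hnrm
  have hmean : 0 ≤ (1 / N : ℝ) * ∑ i, s i :=
    mul_nonneg (by positivity) (Finset.sum_nonneg fun i _ => hfeas.s_nonneg hp i)
  have hS := nonempty_couplings_of_wass_ne_top (ne_top_of_le_ne_top ENNReal.ofReal_ne_top hW)
  calc expLoss n m k β₀ βN βC Q
      ≤ ENNReal.ofReal ((1 / N) * ∑ i, s i) +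
          ENNReal.ofReal lam * wass n m k nrm κ p Q (empMeasure n m k N ξdata) :=
        le_add_mul_biInf hS ENNReal.ofReal_ne_top fun π hπ =>
          expLoss_le_of_mem_couplings hnrm hp hfeas hπ
    _ ≤ ENNReal.ofReal ((1 / N) * ∑ i, s i) + ENNReal.ofReal lam * ENNReal.ofReal ε := by
        gcongr
    _ = ENNReal.ofReal (lam * ε + (1 / N) * ∑ i, s i) := by
        rw [← ENNReal.ofReal_mul hlam, ← ENNReal.ofReal_add hmean (mul_nonneg hlam hε.le),
          add_comm]

open DRLR in
/-- weak duality: if `(λ, s)` is feasible for the dual reformulation, i.e.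
`‖β_N‖_* ≤ λ` and for every data point `i` and every `z ∈ C` both
`l_β(xⁱ, z, yⁱ) - λ d_C(z, zⁱ) ≤ sᵢ` and `l_β(xⁱ, z, -yⁱ) - λκ - λ d_C(z, zⁱ) ≤ sᵢ`,
then for every probability measure `Q` with `W(Q, P̂_N) ≤ ε` one has
`E_Q[l_β] ≤ λ ε + (1/N) ∑ᵢ sᵢ`. -/
theorem dual_feasible_upper_bound
    (n m : ℕ) (k : Fin m → ℕ) (hk : ∀ j, 2 ≤ k j)
    (nrm : (Fin n → ℝ) → ℝ)
    (hnrm_def : ∀ w, nrm w = 0 ↔ w = 0)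
    (hnrm_smul : ∀ (c : ℝ) (w : Fin n → ℝ), nrm (c • w) = |c| * nrm w)
    (hnrm_add : ∀ w w', nrm (w + w') ≤ nrm w + nrm w')
    (κ p : ℝ) (hκ : 0 < κ) (hp : 0 < p)
    (ε : ℝ) (hε : 0 < ε)
    (β₀ : ℝ) (βN : Fin n → ℝ) (βC : CatSpace m k)
    (N : ℕ) (hN : 0 < N) (ξdata : Fin N → Xi n m k)
    (lam : ℝ) (s : Fin N → ℝ)
    (hfeas : feasibleDual n m k nrm κ p β₀ βN βC N ξdata lam s) :
    ∀ Q : MeasureTheory.Measure (Xi n m k), MeasureTheory.IsProbabilityMeasure Q →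
      wass n m k nrm κ p Q (empMeasure n m k N ξdata) ≤ ENNReal.ofReal ε →
      expLoss n m k β₀ βN βC Q ≤ ENNReal.ofReal (lam * ε + (1 / N) * ∑ i, s i) :=
  dual_feasible_upper_bound_general n m k nrm hnrm_def hnrm_smul hnrm_add κ p hp ε hε β₀ βN βC N
    ξdata lam s hfeas
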